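/- Let a ∈ ℂ and define the 5×5 complex matrices A₂ = (a/2) • !![0,0,2,0,0; 0,0,0,√6,0; 0,0,0,0,2; 0,0,0,0,0; 0,0,0,0,0], A₁ = (a/2) • !![0,-√6,0,0,0; 0,0,-1,0,0; 0,0,0,1,0; 0,0,0,0,√6; 0,0,0,0,0], A₀ = (a/2) • diagonal ![2,-1,-2,-1,2], A₋₁ = -A₁ᵀ, A₋₂ = A₂ᵀ. Then A₂ᴴ*A₂ + A₁ᴴ*A₁ + A₀ᴴ*A₀ + A₋₁ᴴ*A₋₁ + A₋₂ᴴ*A₋₂ = ((7/2) * |a|^2 : ℂ) • 1. In particular, if |a|^2 = 2/7 the family (A₂, A₁, A₀, A₋₁, A₋₂) is trace-preserving. -/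

import Mathlib

/-!
Writing each Kraus operator as `(a / 2) • T` reduces the claim to `∑ Tᴴ T = 14 • 1`. Each `T`
shifts the weight basis by a fixed amount, so each `Tᴴ T` is diagonal, and the five diagonals
add up to the constant `14`.
-/

open Matrix

theorem conjTranspose_smul_mul_smul {m n R : Type*} [Fintype m] [CommSemiring R] [StarRing R]
    (c : R) (B : Matrix m n R) :
    (c • B)ᴴ * (c • B) = (star c * c) • (Bᴴ * B) := by
  rw [conjTranspose_smul, Matrix.smul_mul, Matrix.mul_smul, smul_smul]

theorem Complex.star_div_two_mul_div_two (a : ℂ) :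
    star (a / 2) * (a / 2) = ((‖a‖ ^ 2 / 4 : ℝ) : ℂ) := by
  rw [star_div₀, star_ofNat, div_mul_div_comm, Complex.star_def, Complex.conj_mul']
  push_cast
  ring

namespace Ququint

noncomputable section

def T₂ : Matrix (Fin 5) (Fin 5) ℂ :=
  !![0, 0, 2, 0, 0;
     0, 0, 0, (Real.sqrt 6 : ℂ), 0;
     0, 0, 0, 0, 2;
     0, 0, 0, 0, 0;
     0, 0, 0, 0, 0]

def T₁ : Matrix (Fin 5) (Fin 5) ℂ :=
  !![0, -(Real.sqrt 6 : ℂ), 0, 0, 0;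
     0, 0, -1, 0, 0;
     0, 0, 0, 1, 0;
     0, 0, 0, 0, (Real.sqrt 6 : ℂ);
     0, 0, 0, 0, 0]

def T₀ : Matrix (Fin 5) (Fin 5) ℂ := diagonal ![2, -1, -2, -1, 2]

end

lemma ofReal_sqrt_six_mul_self : (Real.sqrt 6 : ℂ) * (Real.sqrt 6 : ℂ) = 6 := by
  rw [← Complex.ofReal_mul, Real.mul_self_sqrt (by norm_num)]
  norm_num

lemma conjTranspose_T₂_mul_T₂ : T₂ᴴ * T₂ = diagonal ![0, 0, 4, 6, 4] := by
  ext i j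
  fin_cases i <;> fin_cases j <;>
    simp [T₂, mul_apply, Fin.sum_univ_five, Complex.conj_ofReal, ofReal_sqrt_six_mul_self,
      map_ofNat] <;> norm_num

lemma conjTranspose_T₁_mul_T₁ : T₁ᴴ * T₁ = diagonal ![0, 6, 1, 1, 6] := by
  ext i j
  fin_cases i <;> fin_cases j <;>
    simp [T₁, mul_apply, Fin.sum_univ_five, Complex.conj_ofReal, ofReal_sqrt_six_mul_self]

lemma conjTranspose_T₀_mul_T₀ : T₀ᴴ * T₀ = diagonal ![4, 1, 4, 1, 4] := by
  ext i j
  fin_cases i <;> fin_cases j <;> simp [T₀, mul_apply, Fin.sum_univ_five] <;> norm_num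

lemma conjTranspose_transpose_T₁_mul_transpose_T₁ :
    T₁ᵀᴴ * T₁ᵀ = diagonal ![6, 1, 1, 6, 0] := by
  ext i j
  fin_cases i <;> fin_cases j <;>
    simp [T₁, mul_apply, Fin.sum_univ_five, Complex.conj_ofReal, ofReal_sqrt_six_mul_self]

lemma conjTranspose_transpose_T₂_mul_transpose_T₂ :
    T₂ᵀᴴ * T₂ᵀ = diagonal ![4, 6, 4, 0, 0] := by
  ext i j
  fin_cases i <;> fin_cases j <;>
    simp [T₂, mul_apply, Fin.sum_univ_five, Complex.conj_ofReal, ofReal_sqrt_six_mul_self,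
      map_ofNat] <;> norm_num

lemma sum_conjTranspose_mul_self :
    T₂ᴴ * T₂ + T₁ᴴ * T₁ + T₀ᴴ * T₀ + (-T₁ᵀ)ᴴ * (-T₁ᵀ) + T₂ᵀᴴ * T₂ᵀ = (14 : ℂ) • 1 := by
  rw [conjTranspose_neg, neg_mul_neg, conjTranspose_T₂_mul_T₂, conjTranspose_T₁_mul_T₁,
    conjTranspose_T₀_mul_T₀, conjTranspose_transpose_T₁_mul_transpose_T₁,
    conjTranspose_transpose_T₂_mul_transpose_T₂, diagonal_add, diagonal_add, diagonal_add,
    diagonal_add, smul_one_eq_diagonal]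
  congr 1
  ext i
  fin_cases i <;> norm_num

end Ququint

open Ququint in
theorem stmt17 (a : ℂ)
    (A₂ A₁ A₀ Am₁ Am₂ : Matrix (Fin 5) (Fin 5) ℂ)
    (hA₂ : A₂ = (a / 2) • !![0, 0, 2, 0, 0;
                             0, 0, 0, (Real.sqrt 6 : ℂ), 0;
                             0, 0, 0, 0, 2;
                             0, 0, 0, 0, 0;
                             0, 0, 0, 0, 0])
    (hA₁ : A₁ = (a / 2) • !![0, -(Real.sqrt 6 : ℂ), 0, 0, 0;
                             0, 0, -1, 0, 0;
                             0, 0, 0, 1, 0;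
                             0, 0, 0, 0, (Real.sqrt 6 : ℂ);
                             0, 0, 0, 0, 0])
    (hA₀ : A₀ = (a / 2) • Matrix.diagonal ![2, -1, -2, -1, 2])
    (hAm₁ : Am₁ = -A₁ᵀ)
    (hAm₂ : Am₂ = A₂ᵀ) :
    A₂ᴴ * A₂ + A₁ᴴ * A₁ + A₀ᴴ * A₀ + Am₁ᴴ * Am₁ + Am₂ᴴ * Am₂
      = (((7/2) * ‖a‖ ^ 2 : ℝ) : ℂ) • 1
    ∧ (‖a‖ ^ 2 = 2/7 →
        A₂ᴴ * A₂ + A₁ᴴ * A₁ + A₀ᴴ * A₀ + Am₁ᴴ * Am₁ + Am₂ᴴ * Am₂ = 1) := by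
  subst hAm₁ hAm₂
  obtain rfl : A₂ = (a / 2) • T₂ := hA₂
  obtain rfl : A₁ = (a / 2) • T₁ := hA₁
  obtain rfl : A₀ = (a / 2) • T₀ := hA₀
  refine (fun hsum => ⟨hsum, fun hnorm => by rw [hsum, hnorm]; norm_num⟩) ?_
  simp only [transpose_smul, ← smul_neg, conjTranspose_smul_mul_smul, ← smul_add,
    sum_conjTranspose_mul_self, smul_smul, Complex.star_div_two_mul_div_two]
  push_cast
  ring_nf
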